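/- Let S be a finite set, q a probability distribution on S, p : S → [0,1] with Σ_c q(c)·p(c) ≤ 0.01. Let C₀ = {c : p(c) ≤ 0.1} and C₁ = S \ C₀. Then 2·Σ_{c ∈ C₀, c' ∈ C₁} q(c)·q(c')·H(p(c) + p(c') - p(c)·p(c')) ≥ 1.62 · Σ_{c' ∈ C₁} q(c')·H(p(c')). -/
import Mathlib


open Finset

attribute [local instance] Classical.propDecidable

/-- Binary entropy function (base 2). Since `Real.logb 2 0 = 0`, `binEnt 0 = binEnt 1 = 0`. -/
noncomputable def binEnt (x : ℝ) : ℝ :=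
  -x * Real.logb 2 x - (1 - x) * Real.logb 2 (1 - x)

lemma binEnt_eq (x : ℝ) : binEnt x = Real.binEntropy x / Real.log 2 := by
  unfold binEnt Real.binEntropy
  rw [Real.logb, Real.logb]
  rcases eq_or_ne x 0 with rfl | hx
  · simp
  rcases eq_or_ne x 1 with rfl | hx1
  · simp
  rw [Real.log_inv, Real.log_inv]
  ring

lemma binEnt_nonneg {x : ℝ} (h0 : 0 ≤ x) (h1 : x ≤ 1) : 0 ≤ binEnt x := by
  rw [binEnt_eq]
  exact div_nonneg (Real.binEntropy_nonneg h0 h1) (Real.log_nonneg (by norm_num))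

lemma binEnt_key {x y : ℝ} (hx0 : 0 ≤ x) (hx1 : x ≤ 1) (hy0 : 0 ≤ y) (hy1 : y ≤ 1) :
    (1 - x) * binEnt y ≤ binEnt (x + y - x * y) := by
  have hc := Real.strictConcave_binEntropy.concaveOn.2 (Set.mem_Icc.2 ⟨hy0, hy1⟩)
    (Set.mem_Icc.2 ⟨zero_le_one, le_refl 1⟩) (by linarith : (0:ℝ) ≤ 1 - x) hx0 (by ring)
  simp only [smul_eq_mul, Real.binEntropy_one, mul_zero, add_zero] at hc
  have h2 : (1 - x) * y + x * 1 = x + y - x * y := by ring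
  rw [h2] at hc
  rw [binEnt_eq, binEnt_eq]
  have hl2 : (0:ℝ) < Real.log 2 := Real.log_pos (by norm_num)
  rw [mul_div_assoc']
  exact div_le_div_of_nonneg_right hc hl2.le

theorem stmt8 {S : Type*} [Fintype S] (q p : S → ℝ)
    (hq0 : ∀ c, 0 ≤ q c) (hq1 : ∑ c, q c = 1)
    (hp : ∀ c, p c ∈ Set.Icc (0:ℝ) 1)
    (hmean : ∑ c, q c * p c ≤ 0.01) :
    2 * ∑ c ∈ Finset.univ.filter (fun c => p c ≤ 0.1),
          ∑ c' ∈ Finset.univ.filter (fun c => ¬ p c ≤ 0.1),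
            q c * q c' * binEnt (p c + p c' - p c * p c')
      ≥ 1.62 * ∑ c' ∈ Finset.univ.filter (fun c => ¬ p c ≤ 0.1), q c' * binEnt (p c') := by
  set A := Finset.univ.filter (fun c => p c ≤ 0.1) with hA
  set B := Finset.univ.filter (fun c : S => ¬ p c ≤ 0.1) with hB
  have hp0 : ∀ c, 0 ≤ p c := fun c => (hp c).1
  have hp1 : ∀ c, p c ≤ 1 := fun c => (hp c).2
  -- sum of q over B is ≤ 0.1
  have hBsmall : ∑ c ∈ B, q c ≤ 0.1 := by
    have h1 : (0.1:ℝ) * ∑ c ∈ B, q c ≤ ∑ c ∈ B, q c * p c := by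
      rw [Finset.mul_sum]
      apply Finset.sum_le_sum
      intro c hc
      have : ¬ p c ≤ 0.1 := (Finset.mem_filter.1 hc).2
      have := hq0 c
      nlinarith [not_le.1 ‹¬ p c ≤ 0.1›]
    have h2 : ∑ c ∈ B, q c * p c ≤ ∑ c, q c * p c := by
      apply Finset.sum_le_sum_of_subset_of_nonneg (Finset.filter_subset _ _)
      intro c _ _
      exact mul_nonneg (hq0 c) (hp0 c)
    nlinarith
  have hAbig : (0.9:ℝ) ≤ ∑ c ∈ A, q c := by
    have hsplit : ∑ c ∈ A, q c + ∑ c ∈ B, q c = 1 := by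
      rw [← hq1]
      exact (Finset.sum_filter_add_sum_filter_not Finset.univ _ q)
    linarith
  set R := ∑ c' ∈ B, q c' * binEnt (p c') with hR
  have hRnonneg : 0 ≤ R := by
    apply Finset.sum_nonneg
    intro c _
    exact mul_nonneg (hq0 c) (binEnt_nonneg (hp0 c) (hp1 c))
  have hinner : ∀ c ∈ A, (0.9:ℝ) * R ≤ ∑ c' ∈ B, q c' * binEnt (p c + p c' - p c * p c') := by
    intro c hc
    have hcA : p c ≤ 0.1 := (Finset.mem_filter.1 hc).2
    rw [hR, Finset.mul_sum]
    apply Finset.sum_le_sum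
    intro c' _
    have hkey := binEnt_key (hp0 c) (hp1 c) (hp0 c') (hp1 c')
    have hbe : 0 ≤ binEnt (p c') := binEnt_nonneg (hp0 c') (hp1 c')
    have : (0.9:ℝ) * binEnt (p c') ≤ binEnt (p c + p c' - p c * p c') := by
      nlinarith
    nlinarith [hq0 c']
  have hmain : (0.9:ℝ) * (∑ c ∈ A, q c) * R ≤
      ∑ c ∈ A, ∑ c' ∈ B, q c * q c' * binEnt (p c + p c' - p c * p c') := by
    have : ∑ c ∈ A, ∑ c' ∈ B, q c * q c' * binEnt (p c + p c' - p c * p c')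
        = ∑ c ∈ A, q c * ∑ c' ∈ B, q c' * binEnt (p c + p c' - p c * p c') := by
      apply Finset.sum_congr rfl
      intro c _
      rw [Finset.mul_sum]
      apply Finset.sum_congr rfl
      intro c' _
      ring
    rw [this]
    calc (0.9:ℝ) * (∑ c ∈ A, q c) * R = ∑ c ∈ A, q c * (0.9 * R) := by
            rw [← Finset.sum_mul]; ring
      _ ≤ ∑ c ∈ A, q c * ∑ c' ∈ B, q c' * binEnt (p c + p c' - p c * p c') := by
            apply Finset.sum_le_sum
            intro c hc
            exact mul_le_mul_of_nonneg_left (hinner c hc) (hq0 c)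
  have hAq : ∑ c ∈ A, q c ≤ 1 := by
    rw [← hq1]
    exact Finset.sum_le_sum_of_subset_of_nonneg (Finset.filter_subset _ _) (fun c _ _ => hq0 c)
  nlinarith [hmain, hAbig, hRnonneg]
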